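/- Universal property of evaluation: let A, B and C be small permutative categories and let (f, δ_1, δ_2): (A,B) → C be a bilinear functor. Then there exists a unique strictly unital lax symmetric monoidal functor g: A → Perm(B,C) such that ev ∘ (g, id_B) = f, i.e., g(a)(b) = f(a,b) on objects, g(a) has structure morphism δ_2 evaluated at a, a morphism l: a → a' in A is sent to the monoidal natural transformation with component f(l, id_b) at b, and the lax monoidal constraint of g is given by δ_1. -/

import Mathlib

open CategoryTheory MonoidalCategory

universe u v

/-- The data of a permutative (strict symmetric monoidal) structure on a category:
a sum functor `⊕`, a zero object, and a symmetry `γ`. -/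
structure PermStruct (C : Type u) [Category.{v} C] where
  add : C → C → C
  addHom : ∀ {a b c d : C}, (a ⟶ b) → (c ⟶ d) → (add a c ⟶ add b d)
  zero : C
  braid : ∀ a b : C, add a b ⟶ add b a

namespace PermStruct

/-- The axioms making `P` a permutative category: `⊕` is a functor, strictly associative and
unital, and `γ` is a natural symmetry satisfying the hexagon axiom. -/
structure IsPermutative {C : Type u} [Category.{v} C] (P : PermStruct C) : Prop where
  addHom_id : ∀ a b : C, P.addHom (𝟙 a) (𝟙 b) = 𝟙 (P.add a b)
  addHom_comp : ∀ {a b c a' b' c' : C} (f : a ⟶ b) (g : b ⟶ c) (f' : a' ⟶ b') (g' : b' ⟶ c'),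
      P.addHom (f ≫ g) (f' ≫ g') = P.addHom f f' ≫ P.addHom g g'
  add_assoc : ∀ a b c : C, P.add (P.add a b) c = P.add a (P.add b c)
  zero_add : ∀ a : C, P.add P.zero a = a
  add_zero : ∀ a : C, P.add a P.zero = a
  addHom_assoc : ∀ {a b c a' b' c' : C} (f : a ⟶ a') (g : b ⟶ b') (h : c ⟶ c'),
      P.addHom (P.addHom f g) h =
        eqToHom (add_assoc a b c) ≫ P.addHom f (P.addHom g h) ≫ eqToHom (add_assoc a' b' c').symm
  zero_addHom : ∀ {a b : C} (f : a ⟶ b),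
      P.addHom (𝟙 P.zero) f = eqToHom (zero_add a) ≫ f ≫ eqToHom (zero_add b).symm
  addHom_zero : ∀ {a b : C} (f : a ⟶ b),
      P.addHom f (𝟙 P.zero) = eqToHom (add_zero a) ≫ f ≫ eqToHom (add_zero b).symm
  braid_naturality : ∀ {a b c d : C} (f : a ⟶ b) (g : c ⟶ d),
      P.addHom f g ≫ P.braid b d = P.braid a c ≫ P.addHom g f
  braid_braid : ∀ a b : C, P.braid a b ≫ P.braid b a = 𝟙 (P.add a b)
  braid_hexagon : ∀ a b c : C,
      P.braid (P.add a b) c =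
        eqToHom (add_assoc a b c) ≫ P.addHom (𝟙 a) (P.braid b c) ≫
          eqToHom (add_assoc a c b).symm ≫ P.addHom (P.braid a c) (𝟙 b) ≫
          eqToHom (add_assoc c a b)

end PermStruct

/-- A small permutative category. -/
structure PermCat : Type 1 where
  C : Type
  [instCat : SmallCategory C]
  str : PermStruct C
  is : str.IsPermutative

attribute [instance] PermCat.instCat

/-- The "middle four interchange" map `(w ⊕ x) ⊕ (y ⊕ z) ⟶ (w ⊕ y) ⊕ (x ⊕ z)`,
given by `1 ⊕ γ ⊕ 1` (using strict associativity). -/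
def PermCat.midSwap (B : PermCat) (w x y z : B.C) :
    B.str.add (B.str.add w x) (B.str.add y z) ⟶ B.str.add (B.str.add w y) (B.str.add x z) :=
  eqToHom (by rw [B.is.add_assoc w x (B.str.add y z), ← B.is.add_assoc x y z]) ≫
    B.str.addHom (𝟙 w) (B.str.addHom (B.str.braid x y) (𝟙 z)) ≫
    eqToHom (by rw [B.is.add_assoc w y (B.str.add x z), B.is.add_assoc y x z])
/-- A strictly unital lax symmetric monoidal functor between permutative categories:
a functor `f` together with a natural structure morphism
`δ : f a ⊕ f a' ⟶ f (a ⊕ a')` which is strictly unital, associative and compatible with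
the symmetries. -/
structure SULax (A B : PermCat) : Type where
  obj : A.C → B.C
  map : ∀ {a b : A.C}, (a ⟶ b) → (obj a ⟶ obj b)
  map_id : ∀ a : A.C, map (𝟙 a) = 𝟙 (obj a)
  map_comp : ∀ {a b c : A.C} (f : a ⟶ b) (g : b ⟶ c), map (f ≫ g) = map f ≫ map g
  δ : ∀ a a' : A.C, B.str.add (obj a) (obj a') ⟶ obj (A.str.add a a')
  δ_natural : ∀ {a b a' b' : A.C} (f : a ⟶ b) (g : a' ⟶ b'),
      B.str.addHom (map f) (map g) ≫ δ b b' = δ a a' ≫ map (A.str.addHom f g)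
  obj_zero : obj A.str.zero = B.str.zero
  δ_zero_left : ∀ a : A.C,
      δ A.str.zero a = eqToHom (by rw [obj_zero, B.is.zero_add, A.is.zero_add])
  δ_zero_right : ∀ a : A.C,
      δ a A.str.zero = eqToHom (by rw [obj_zero, B.is.add_zero, A.is.add_zero])
  δ_assoc : ∀ a a' a'' : A.C,
      B.str.addHom (𝟙 (obj a)) (δ a' a'') ≫ δ a (A.str.add a' a'') =
        eqToHom (B.is.add_assoc (obj a) (obj a') (obj a'')).symm ≫
          B.str.addHom (δ a a') (𝟙 (obj a'')) ≫ δ (A.str.add a a') a'' ≫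
          eqToHom (congrArg obj (A.is.add_assoc a a' a''))
  δ_braid : ∀ a a' : A.C,
      B.str.braid (obj a) (obj a') ≫ δ a' a = δ a a' ≫ map (A.str.braid a a')

/-- A monoidal natural transformation between strictly unital lax symmetric monoidal
functors. -/
structure MonTrans {A B : PermCat} (f g : SULax A B) : Type where
  app : ∀ a : A.C, f.obj a ⟶ g.obj a
  naturality : ∀ {a b : A.C} (h : a ⟶ b), f.map h ≫ app b = app a ≫ g.map h
  monoidal : ∀ a a' : A.C,
      f.δ a a' ≫ app (A.str.add a a') = B.str.addHom (app a) (app a') ≫ g.δ a a'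
  unital : app A.str.zero = eqToHom (f.obj_zero.trans g.obj_zero.symm)

theorem MonTrans.ext' {A B : PermCat} {f g : SULax A B} :
    ∀ {η θ : MonTrans f g}, (∀ a, η.app a = θ.app a) → η = θ
  | ⟨a₁, _, _, _⟩, ⟨a₂, _, _, _⟩, h => by
      obtain rfl : a₁ = a₂ := funext h
      rfl

/-- The category of strictly unital lax symmetric monoidal functors `A → B` and
monoidal natural transformations. -/
instance SULax.category (A B : PermCat) : SmallCategory (SULax A B) where
  Hom := MonTrans
  id f :=
    { app := fun a => 𝟙 (f.obj a)
      naturality := by intros; simp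
      monoidal := by intro a a'; rw [B.is.addHom_id]; simp
      unital := by simp }
  comp := fun {f g h} η θ =>
    { app := fun a => η.app a ≫ θ.app a
      naturality := by
        intro a b k
        rw [← Category.assoc, η.naturality, Category.assoc, θ.naturality, ← Category.assoc]
      monoidal := by
        intro a a'
        rw [← Category.assoc, η.monoidal, Category.assoc, θ.monoidal, ← Category.assoc,
          ← B.is.addHom_comp]
      unital := by rw [η.unital, θ.unital]; simp }
  id_comp := by intros; apply MonTrans.ext'; intros; simp
  comp_id := by intros; apply MonTrans.ext'; intros; simp
  assoc := by intros; apply MonTrans.ext'; intros; simp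

@[simp] theorem MonTrans.id_app {A B : PermCat} (f : SULax A B) (a : A.C) :
    (𝟙 f : MonTrans f f).app a = 𝟙 (f.obj a) := rfl

@[simp] theorem MonTrans.comp_app {A B : PermCat} {f g h : SULax A B}
    (η : f ⟶ g) (θ : g ⟶ h) (a : A.C) :
    (η ≫ θ : MonTrans f h).app a = η.app a ≫ θ.app a := rfl

/-- The identity functor as a strictly unital lax symmetric monoidal functor. -/
def SULax.id (A : PermCat) : SULax A A where
  obj a := a
  map f := f
  map_id _ := rfl
  map_comp _ _ := rfl
  δ a a' := 𝟙 _
  δ_natural _ _ := by simp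
  obj_zero := rfl
  δ_zero_left _ := by simp
  δ_zero_right _ := by simp
  δ_assoc a a' a'' := by simp [A.is.addHom_id]
  δ_braid _ _ := by simp
/-- A bilinear functor `(𝒜, ℬ) → 𝒞` of permutative categories in the sense of
Elmendorf–Mandell: a functor `𝒜 × ℬ → 𝒞` with natural linearity constraints `δ₁, δ₂`,
which vanishes when either input is zero, and whose constraints are strictly unital,
associative, compatible with the symmetries and satisfy the interchange condition. -/
structure Bilinear (𝒜 ℬ 𝒞 : PermCat) : Type where
  obj : 𝒜.C → ℬ.C → 𝒞.C
  map : ∀ {a a' : 𝒜.C} {b b' : ℬ.C}, (a ⟶ a') → (b ⟶ b') → (obj a b ⟶ obj a' b')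
  map_id : ∀ a b, map (𝟙 a) (𝟙 b) = 𝟙 (obj a b)
  map_comp : ∀ {a₁ a₂ a₃ : 𝒜.C} {b₁ b₂ b₃ : ℬ.C}
      (f : a₁ ⟶ a₂) (f' : a₂ ⟶ a₃) (g : b₁ ⟶ b₂) (g' : b₂ ⟶ b₃),
      map (f ≫ f') (g ≫ g') = map f g ≫ map f' g'
  δ₁ : ∀ (a a' : 𝒜.C) (b : ℬ.C), 𝒞.str.add (obj a b) (obj a' b) ⟶ obj (𝒜.str.add a a') b
  δ₂ : ∀ (a : 𝒜.C) (b b' : ℬ.C), 𝒞.str.add (obj a b) (obj a b') ⟶ obj a (ℬ.str.add b b')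
  δ₁_natural : ∀ {a₁ a₂ a₁' a₂' : 𝒜.C} {b b' : ℬ.C} (f : a₁ ⟶ a₂) (f' : a₁' ⟶ a₂') (g : b ⟶ b'),
      𝒞.str.addHom (map f g) (map f' g) ≫ δ₁ a₂ a₂' b' =
        δ₁ a₁ a₁' b ≫ map (𝒜.str.addHom f f') g
  δ₂_natural : ∀ {a a' : 𝒜.C} {b₁ b₂ b₁' b₂' : ℬ.C} (f : a ⟶ a') (g : b₁ ⟶ b₂) (g' : b₁' ⟶ b₂'),
      𝒞.str.addHom (map f g) (map f g') ≫ δ₂ a' b₂ b₂' =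
        δ₂ a b₁ b₁' ≫ map f (ℬ.str.addHom g g')
  obj_zero_left : ∀ b, obj 𝒜.str.zero b = 𝒞.str.zero
  obj_zero_right : ∀ a, obj a ℬ.str.zero = 𝒞.str.zero
  map_zero_left : ∀ {b b' : ℬ.C} (g : b ⟶ b'),
      map (𝟙 𝒜.str.zero) g = eqToHom (by rw [obj_zero_left, obj_zero_left])
  map_zero_right : ∀ {a a' : 𝒜.C} (f : a ⟶ a'),
      map f (𝟙 ℬ.str.zero) = eqToHom (by rw [obj_zero_right, obj_zero_right])
  δ₁_zero₁ : ∀ a' b, δ₁ 𝒜.str.zero a' b =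
      eqToHom (by rw [obj_zero_left, 𝒞.is.zero_add, 𝒜.is.zero_add])
  δ₁_zero₂ : ∀ a b, δ₁ a 𝒜.str.zero b =
      eqToHom (by rw [obj_zero_left, 𝒞.is.add_zero, 𝒜.is.add_zero])
  δ₁_zero₃ : ∀ a a', δ₁ a a' ℬ.str.zero =
      eqToHom (by rw [obj_zero_right, obj_zero_right, obj_zero_right, 𝒞.is.add_zero])
  δ₂_zero₁ : ∀ a b', δ₂ a ℬ.str.zero b' =
      eqToHom (by rw [obj_zero_right, 𝒞.is.zero_add, ℬ.is.zero_add])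
  δ₂_zero₂ : ∀ a b, δ₂ a b ℬ.str.zero =
      eqToHom (by rw [obj_zero_right, 𝒞.is.add_zero, ℬ.is.add_zero])
  δ₂_zero₃ : ∀ b b', δ₂ 𝒜.str.zero b b' =
      eqToHom (by rw [obj_zero_left, obj_zero_left, obj_zero_left, 𝒞.is.add_zero])
  δ₁_assoc : ∀ a a' a'' b,
      𝒞.str.addHom (𝟙 (obj a b)) (δ₁ a' a'' b) ≫ δ₁ a (𝒜.str.add a' a'') b =
        eqToHom (𝒞.is.add_assoc (obj a b) (obj a' b) (obj a'' b)).symm ≫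
          𝒞.str.addHom (δ₁ a a' b) (𝟙 (obj a'' b)) ≫ δ₁ (𝒜.str.add a a') a'' b ≫
          eqToHom (by rw [𝒜.is.add_assoc])
  δ₂_assoc : ∀ a b b' b'',
      𝒞.str.addHom (𝟙 (obj a b)) (δ₂ a b' b'') ≫ δ₂ a b (ℬ.str.add b' b'') =
        eqToHom (𝒞.is.add_assoc (obj a b) (obj a b') (obj a b'')).symm ≫
          𝒞.str.addHom (δ₂ a b b') (𝟙 (obj a b'')) ≫ δ₂ a (ℬ.str.add b b') b'' ≫
          eqToHom (by rw [ℬ.is.add_assoc])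
  δ₁_braid : ∀ a a' b,
      𝒞.str.braid (obj a b) (obj a' b) ≫ δ₁ a' a b =
        δ₁ a a' b ≫ map (𝒜.str.braid a a') (𝟙 b)
  δ₂_braid : ∀ a b b',
      𝒞.str.braid (obj a b) (obj a b') ≫ δ₂ a b' b =
        δ₂ a b b' ≫ map (𝟙 a) (ℬ.str.braid b b')
  interchange : ∀ a a' b b',
      𝒞.str.addHom (δ₁ a a' b) (δ₁ a a' b') ≫ δ₂ (𝒜.str.add a a') b b' =
        𝒞.midSwap (obj a b) (obj a' b) (obj a b') (obj a' b') ≫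
          𝒞.str.addHom (δ₂ a b b') (δ₂ a' b b') ≫ δ₁ a a' (ℬ.str.add b b')
/-- The pointwise-sum permutative structure on the category `Perm(A,B)` of strictly
unital lax symmetric monoidal functors `A → B` and monoidal natural transformations:
`(f ⊕ g)(a) = f(a) ⊕ g(a)`, with structure morphism the composite
`(1 ⊕ γ ⊕ 1) ≫ (δ^f ⊕ δ^g)`, and everything else pointwise. -/
structure PointwiseStr (A B : PermCat) : Type where
  P : PermStruct (SULax A B)
  is : P.IsPermutative
  add_obj : ∀ (f g : SULax A B) (a : A.C), (P.add f g).obj a = B.str.add (f.obj a) (g.obj a)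
  add_δ : ∀ (f g : SULax A B) (a a' : A.C),
      (P.add f g).δ a a' =
        eqToHom (by rw [add_obj, add_obj]) ≫
          B.midSwap (f.obj a) (g.obj a) (f.obj a') (g.obj a') ≫
          B.str.addHom (f.δ a a') (g.δ a a') ≫ eqToHom (add_obj f g (A.str.add a a')).symm
  addHom_app : ∀ {f g f' g' : SULax A B} (η : f ⟶ f') (θ : g ⟶ g') (a : A.C),
      (P.addHom η θ).app a =
        eqToHom (add_obj f g a) ≫ B.str.addHom (η.app a) (θ.app a) ≫
          eqToHom (add_obj f' g' a).symm
  zero_obj : ∀ a : A.C, P.zero.obj a = B.str.zero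
  braid_app : ∀ (f g : SULax A B) (a : A.C),
      (P.braid f g).app a =
        eqToHom (add_obj f g a) ≫ B.str.braid (f.obj a) (g.obj a) ≫
          eqToHom (add_obj g f a).symm

/-- The permutative category `Perm(A,B)`. -/
def PointwiseStr.toPermCat {A B : PermCat} (h : PointwiseStr A B) : PermCat :=
  { C := SULax A B, str := h.P, is := h.is }

/-- The evaluation bilinear functor `ev : (Perm(A,B), A) → B`, `ev(f,a) = f(a)`,
whose first linearity constraint is the identity and whose second linearity constraint
is the structure morphism of `f`. -/
structure EvStr (A B : PermCat) (h : PointwiseStr A B) : Type where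
  bil : Bilinear h.toPermCat A B
  obj_eq : ∀ (f : SULax A B) (a : A.C), bil.obj f a = f.obj a
  map_eq : ∀ {f f' : SULax A B} {a a' : A.C} (η : f ⟶ f') (u : a ⟶ a'),
      bil.map η u =
        eqToHom (obj_eq f a) ≫ f.map u ≫ η.app a' ≫ eqToHom (obj_eq f' a').symm
  δ₁_eq : ∀ (f f' : SULax A B) (a : A.C),
      bil.δ₁ f f' a = eqToHom (by simp only [PointwiseStr.toPermCat]; rw [obj_eq, obj_eq, obj_eq, h.add_obj])
  δ₂_eq : ∀ (f : SULax A B) (a a' : A.C),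
      bil.δ₂ f a a' =
        eqToHom (by rw [obj_eq, obj_eq]) ≫ f.δ a a' ≫ eqToHom (obj_eq f (A.str.add a a')).symm

/-- The composition bilinear functor `∘ : (Perm(B,C), Perm(A,B)) → Perm(A,C)`,
whose first linearity constraint is the identity and whose second linearity constraint
is given by the structure morphism of `g`. -/
structure CompStr (A B C : PermCat)
    (hBC : PointwiseStr B C) (hAB : PointwiseStr A B) (hAC : PointwiseStr A C) : Type where
  bil : Bilinear hBC.toPermCat hAB.toPermCat hAC.toPermCat
  obj_obj : ∀ (g : SULax B C) (f : SULax A B) (a : A.C),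
      (bil.obj g f).obj a = g.obj (f.obj a)
  obj_map : ∀ (g : SULax B C) (f : SULax A B) {a a' : A.C} (u : a ⟶ a'),
      (bil.obj g f).map u =
        eqToHom (obj_obj g f a) ≫ g.map (f.map u) ≫ eqToHom (obj_obj g f a').symm
  obj_δ : ∀ (g : SULax B C) (f : SULax A B) (a a' : A.C),
      (bil.obj g f).δ a a' =
        eqToHom (by rw [obj_obj, obj_obj]) ≫ g.δ (f.obj a) (f.obj a') ≫ g.map (f.δ a a') ≫
          eqToHom (obj_obj g f (A.str.add a a')).symm
  map_app : ∀ {g g' : SULax B C} {f f' : SULax A B} (θ : g ⟶ g') (η : f ⟶ f') (a : A.C),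
      (bil.map θ η).app a =
        eqToHom (obj_obj g f a) ≫ g.map (η.app a) ≫ θ.app (f'.obj a) ≫
          eqToHom (obj_obj g' f' a).symm
  δ₁_app : ∀ (g g' : SULax B C) (f : SULax A B) (a : A.C),
      (bil.δ₁ g g' f).app a =
        eqToHom (by simp only [PointwiseStr.toPermCat]; rw [hAC.add_obj, obj_obj, obj_obj, obj_obj, hBC.add_obj])
  δ₂_app : ∀ (g : SULax B C) (f f' : SULax A B) (a : A.C),
      (bil.δ₂ g f f').app a =
        eqToHom (by simp only [PointwiseStr.toPermCat]; rw [hAC.add_obj, obj_obj, obj_obj]) ≫ g.δ (f.obj a) (f'.obj a) ≫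
          eqToHom (by simp only [PointwiseStr.toPermCat]; rw [obj_obj, hAB.add_obj])

section UniversalProperty

variable {A B C : PermCat} (hBC : PointwiseStr B C) (ev : EvStr B C hBC)
  (f : Bilinear A B C)

/-- `ev ∘ (g, id_B) = f` as bilinear functors: the composite bilinear functor agrees
with `f` on objects, on morphisms, and has the same two linearity constraints. -/
def EvFactors (g : SULax A hBC.toPermCat) : Prop :=
  ∃ hobj : ∀ (a : A.C) (b : B.C), ev.bil.obj (g.obj a) b = f.obj a b,
    (∀ {a a' : A.C} (l : a ⟶ a') {b b' : B.C} (u : b ⟶ b'),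
        ev.bil.map (g.map l) u = eqToHom (hobj a b) ≫ f.map l u ≫ eqToHom (hobj a' b').symm) ∧
    (∀ (a a' : A.C) (b : B.C),
        ev.bil.δ₁ (g.obj a) (g.obj a') b ≫ ev.bil.map (g.δ a a') (𝟙 b) =
          eqToHom (by rw [hobj, hobj]) ≫ f.δ₁ a a' b ≫
            eqToHom (hobj (A.str.add a a') b).symm) ∧
    (∀ (a : A.C) (b b' : B.C),
        ev.bil.δ₂ (g.obj a) b b' =
          eqToHom (by rw [hobj, hobj]) ≫ f.δ₂ a b b' ≫
            eqToHom (hobj a (B.str.add b b')).symm)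

/-- The explicit description of the adjoint functor `g : A → Perm(B,C)`:
`g(a)(b) = f(a,b)`, `g(a)` has structure morphism `δ₂`, a morphism `l : a ⟶ a'` is sent
to the monoidal natural transformation with component `f(l, id_b)` at `b`, and the lax
monoidal constraint of `g` is given by `δ₁`. -/
def EvAdjointDesc (g : SULax A hBC.toPermCat) : Prop :=
  ∃ hd : ∀ (a : A.C) (b : B.C), (g.obj a).obj b = f.obj a b,
    (∀ (a : A.C) {b b' : B.C} (u : b ⟶ b'),
        (g.obj a).map u = eqToHom (hd a b) ≫ f.map (𝟙 a) u ≫ eqToHom (hd a b').symm) ∧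
    (∀ (a : A.C) (b b' : B.C),
        (g.obj a).δ b b' =
          eqToHom (by rw [hd, hd]) ≫ f.δ₂ a b b' ≫
            eqToHom (hd a (B.str.add b b')).symm) ∧
    (∀ {a a' : A.C} (l : a ⟶ a') (b : B.C),
        (g.map l).app b = eqToHom (hd a b) ≫ f.map l (𝟙 b) ≫ eqToHom (hd a' b).symm) ∧
    (∀ (a a' : A.C) (b : B.C),
        (g.δ a a').app b =
          eqToHom (by simp only [PointwiseStr.toPermCat]; rw [hBC.add_obj, hd, hd]) ≫ f.δ₁ a a' b ≫
            eqToHom (hd (A.str.add a a') b).symm)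

/-!
The adjoint is the currying of `f`: `g a = f(a, -)` is lax symmetric monoidal through `δ₂`,
`l ↦ f(l, 𝟙)` is monoidal natural by naturality of `δ₂`, and the components of `δ₁` form
monoidal natural transformations `g a ⊕ g a' ⟶ g (a ⊕ a')` precisely by the interchange axiom.
Uniqueness holds because `ev` is honest evaluation, with `δ₁ = 𝟙` and `δ₂` the structure
morphism: `ev ∘ (g, id) = f` then prescribes every piece of data of `g`.
-/

-- Elaboration and rewriting must see the objects and morphisms of `hBC.toPermCat` as those of
-- `SULax B C`.
attribute [reducible] PointwiseStr.toPermCat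

theorem PermCat.addHom_eqToHom_comp_left (X : PermCat) {a a' b c d : X.C}
    (p : a = a') (u : a' ⟶ b) (v : c ⟶ d) :
    X.str.addHom (eqToHom p ≫ u) v = eqToHom (by rw [p]) ≫ X.str.addHom u v := by
  subst p; simp

theorem PermCat.addHom_eqToHom_comp_right (X : PermCat) {a b c c' d : X.C}
    (u : a ⟶ b) (q : c = c') (v : c' ⟶ d) :
    X.str.addHom u (eqToHom q ≫ v) = eqToHom (by rw [q]) ≫ X.str.addHom u v := by
  subst q; simp

theorem PermCat.addHom_comp_eqToHom_left (X : PermCat) {a b b' c d : X.C}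
    (u : a ⟶ b) (p : b = b') (v : c ⟶ d) :
    X.str.addHom (u ≫ eqToHom p) v = X.str.addHom u v ≫ eqToHom (by rw [p]) := by
  subst p; simp

theorem PermCat.addHom_comp_eqToHom_right (X : PermCat) {a b c d d' : X.C}
    (u : a ⟶ b) (v : c ⟶ d) (q : d = d') :
    X.str.addHom u (v ≫ eqToHom q) = X.str.addHom u v ≫ eqToHom (by rw [q]) := by
  subst q; simp

theorem SULax.ext_of_eqToHom {A B : PermCat} :
    ∀ {F G : SULax A B} (hobj : ∀ a, F.obj a = G.obj a),
      (∀ {a a' : A.C} (l : a ⟶ a'),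
        F.map l = eqToHom (hobj a) ≫ G.map l ≫ eqToHom (hobj a').symm) →
      (∀ a a', F.δ a a' =
        eqToHom (by rw [hobj, hobj]) ≫ G.δ a a' ≫ eqToHom (hobj (A.str.add a a')).symm) →
      F = G
  | ⟨o₁, m₁, _, _, d₁, _, _, _, _, _, _⟩, ⟨o₂, m₂, _, _, d₂, _, _, _, _, _, _⟩,
    hobj, hmap, hδ => by
      obtain rfl : o₁ = o₂ := funext hobj
      obtain rfl : @m₁ = @m₂ := by
        funext a a' l
        simpa using hmap l
      obtain rfl : d₁ = d₂ := by
        funext a a'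
        simpa using hδ a a'
      rfl

theorem SULax.eqToHom_app {A B : PermCat} {F G : SULax A B} (e : F = G) (a : A.C) :
    (eqToHom e : MonTrans F G).app a = eqToHom (by rw [e]) := by
  subst e; simp

/- `PointwiseStr` leaves the action of `F ⊕ G` and of `0` on morphisms and the structure
morphism of `0` unspecified; bilinearity of `ev` pins them down. -/

theorem EvStr.add_map (ev : EvStr B C hBC) (F G : SULax B C) {b b' : B.C} (u : b ⟶ b') :
    (hBC.P.add F G).map u =
      eqToHom (hBC.add_obj F G b) ≫ C.str.addHom (F.map u) (G.map u) ≫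
        eqToHom (hBC.add_obj F G b').symm := by
  have h := ev.bil.δ₁_natural (𝟙 F) (𝟙 G) u
  rw [ev.δ₁_eq, ev.δ₁_eq, hBC.is.addHom_id, ev.map_eq, ev.map_eq, ev.map_eq] at h
  simp only [MonTrans.id_app, Category.id_comp] at h
  rw [C.addHom_eqToHom_comp_left, C.addHom_comp_eqToHom_left,
    C.addHom_eqToHom_comp_right, C.addHom_comp_eqToHom_right] at h
  simp only [Category.assoc, eqToHom_trans, eqToHom_comp_iff, comp_eqToHom_iff] at h ⊢
  simp [h]

theorem EvStr.zero_map (ev : EvStr B C hBC) {b b' : B.C} (u : b ⟶ b') :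
    hBC.P.zero.map u = eqToHom (by rw [hBC.zero_obj, hBC.zero_obj]) := by
  have h := ev.bil.map_zero_left u
  rw [ev.map_eq, MonTrans.id_app, Category.id_comp, eqToHom_comp_iff, comp_eqToHom_iff] at h
  rw [h]
  simp

theorem EvStr.zero_δ (ev : EvStr B C hBC) (b b' : B.C) :
    hBC.P.zero.δ b b' =
      eqToHom (by rw [hBC.zero_obj, hBC.zero_obj, hBC.zero_obj, C.is.add_zero]) := by
  have h := ev.bil.δ₂_zero₃ b b'
  rw [ev.δ₂_eq, eqToHom_comp_iff, comp_eqToHom_iff] at h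
  rw [h]
  simp

namespace Bilinear

abbrev curryObj (a : A.C) : SULax B C where
  obj := f.obj a
  map u := f.map (𝟙 a) u
  map_id b := f.map_id a b
  map_comp u v := by rw [← f.map_comp, Category.comp_id]
  δ := f.δ₂ a
  δ_natural u v := f.δ₂_natural (𝟙 a) u v
  obj_zero := f.obj_zero_right a
  δ_zero_left := f.δ₂_zero₁ a
  δ_zero_right := f.δ₂_zero₂ a
  δ_assoc := f.δ₂_assoc a
  δ_braid := f.δ₂_braid a

abbrev curryMap {a a' : A.C} (l : a ⟶ a') : f.curryObj a ⟶ f.curryObj a' where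
  app b := f.map l (𝟙 b)
  naturality u := by simp only [← f.map_comp, Category.id_comp, Category.comp_id]
  monoidal b b' := by simpa [B.is.addHom_id] using (f.δ₂_natural l (𝟙 b) (𝟙 b')).symm
  unital := f.map_zero_right l

abbrev curryδ (ev : EvStr B C hBC) (a a' : A.C) :
    hBC.P.add (f.curryObj a) (f.curryObj a') ⟶ f.curryObj (A.str.add a a') where
  app b := eqToHom (hBC.add_obj (f.curryObj a) (f.curryObj a') b) ≫ f.δ₁ a a' b
  naturality u := by simp [ev.add_map, ← A.is.addHom_id, ← f.δ₁_natural (𝟙 a) (𝟙 a') u]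
  monoidal b b' := by
    rw [hBC.add_δ]
    dsimp only
    rw [C.addHom_eqToHom_comp_left, C.addHom_eqToHom_comp_right]
    simp only [Category.assoc, eqToHom_trans_assoc, eqToHom_refl, Category.id_comp]
    rw [f.interchange]
  unital := by simp [f.δ₁_zero₃]

theorem curryObj_zero (ev : EvStr B C hBC) : f.curryObj A.str.zero = hBC.P.zero :=
  SULax.ext_of_eqToHom (fun b => (f.obj_zero_left b).trans (hBC.zero_obj b).symm)
    (fun u => by simp [ev.zero_map, f.map_zero_left])
    (fun b b' => by simp [ev.zero_δ, f.δ₂_zero₃])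

abbrev curry (ev : EvStr B C hBC) : SULax A hBC.toPermCat where
  obj := f.curryObj
  map := f.curryMap
  map_id a := MonTrans.ext' fun b => f.map_id a b
  map_comp l l' := MonTrans.ext' fun b => by
    rw [MonTrans.comp_app, ← f.map_comp, Category.comp_id]
  δ := f.curryδ hBC ev
  δ_natural l l' := MonTrans.ext' fun b => by
    rw [MonTrans.comp_app, MonTrans.comp_app, hBC.addHom_app]
    simp [← f.δ₁_natural l l' (𝟙 b)]
  obj_zero := f.curryObj_zero hBC ev
  δ_zero_left a := MonTrans.ext' fun b => by simp [SULax.eqToHom_app, f.δ₁_zero₁]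
  δ_zero_right a := MonTrans.ext' fun b => by simp [SULax.eqToHom_app, f.δ₁_zero₂]
  δ_assoc a a' a'' := MonTrans.ext' fun b => by
    simp only [MonTrans.comp_app, hBC.addHom_app, SULax.eqToHom_app, MonTrans.id_app]
    rw [C.addHom_eqToHom_comp_right, C.addHom_eqToHom_comp_left]
    simp only [Category.assoc, eqToHom_trans_assoc, eqToHom_refl, Category.id_comp]
    rw [f.δ₁_assoc]
    simp
  δ_braid a a' := MonTrans.ext' fun b => by
    rw [MonTrans.comp_app, MonTrans.comp_app, hBC.braid_app]
    simp [← f.δ₁_braid a a' b]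

theorem evFactors_curry : EvFactors hBC ev f (f.curry hBC ev) := by
  refine ⟨fun a b => ev.obj_eq (f.curryObj a) b, fun l b b' u => ?_, fun a a' b => ?_,
    fun a b b' => ?_⟩
  · rw [ev.map_eq]
    slice_lhs 2 3 => rw [← f.map_comp]
    simp
  · simp [ev.δ₁_eq, ev.map_eq, SULax.map_id]
  · simp [ev.δ₂_eq]

theorem evAdjointDesc_curry : EvAdjointDesc hBC f (f.curry hBC ev) :=
  ⟨fun _ _ => rfl, fun _ _ _ _ => by simp, fun _ _ _ => by simp, fun _ _ => by simp,
    fun _ _ _ => by simp⟩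

variable {hBC ev f} {g : SULax A hBC.toPermCat}

theorem obj_eq_curryObj_of_evFactors (hg : EvFactors hBC ev f g) (a : A.C) :
    g.obj a = f.curryObj a := by
  obtain ⟨hobj, hmap, -, hδ₂⟩ := hg
  refine SULax.ext_of_eqToHom (fun b => (ev.obj_eq (g.obj a) b).symm.trans (hobj a b))
    (fun {b b'} u => ?_) (fun b b' => ?_)
  · have h := hmap (𝟙 a) u
    rw [g.map_id, ev.map_eq, MonTrans.id_app, Category.id_comp, eqToHom_comp_iff,
      comp_eqToHom_iff] at h
    simp [h]
  · have h := hδ₂ a b b'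
    rw [ev.δ₂_eq, eqToHom_comp_iff, comp_eqToHom_iff] at h
    simp [h]

theorem eq_curry_of_evFactors (hg : EvFactors hBC ev f g) : g = f.curry hBC ev := by
  have hobj := obj_eq_curryObj_of_evFactors hg
  obtain ⟨_, hmap, hδ₁, -⟩ := hg
  refine SULax.ext_of_eqToHom hobj (fun {a a'} l => MonTrans.ext' fun b => ?_)
    (fun a a' => MonTrans.ext' fun b => ?_)
  · have h := hmap l (𝟙 b)
    rw [ev.map_eq, (g.obj a).map_id, Category.id_comp, eqToHom_comp_iff,
      comp_eqToHom_iff] at h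
    simp [SULax.eqToHom_app, h]
  · have h := hδ₁ a a' b
    rw [ev.δ₁_eq, ev.map_eq, SULax.map_id, Category.id_comp, eqToHom_trans_assoc,
      eqToHom_comp_iff, comp_eqToHom_iff] at h
    simp [SULax.eqToHom_app, h]

end Bilinear

/-- **universal property of evaluation.** Let `A`, `B`, `C` be small
permutative categories and let `(f, δ₁, δ₂) : (A,B) → C` be a bilinear functor.  There
exists a unique strictly unital lax symmetric monoidal functor `g : A → Perm(B,C)` such
that `ev ∘ (g, id_B) = f`; moreover `g` is given by the explicit description
`g(a)(b) = f(a,b)` etc. -/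
theorem evaluation_universal_property :
    ∃ g : SULax A hBC.toPermCat,
      EvFactors hBC ev f g ∧ EvAdjointDesc hBC f g ∧
        ∀ g' : SULax A hBC.toPermCat, EvFactors hBC ev f g' → g' = g :=
  ⟨f.curry hBC ev, f.evFactors_curry hBC ev, f.evAdjointDesc_curry hBC ev,
    fun _ => Bilinear.eq_curry_of_evFactors⟩

end UniversalProperty
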